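/- Let D : A → A* be a continuous derivation. Then D̃ : A ⋈^θ I → (A ⋈^θ I)* defined by D̃(a,i) = (D(a), 0) (under the identification (A ⋈^θ I)* ≅ A* × I*) is a continuous derivation, and D̃ is inner if and only if D is inner. -/

import Mathlib

noncomputable def amul {A B : Type*} [NonUnitalNormedRing A] [NormedSpace ℂ A]
    [NonUnitalNormedRing B] [NormedSpace ℂ B]
    (θ : A →L[ℂ] B) {I : Submodule ℂ B}
    (hIl : ∀ b i : B, i ∈ I → b * i ∈ I) (hIr : ∀ b i : B, i ∈ I → i * b ∈ I)
    (x y : A × I) : A × I :=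
  (x.1 * y.1,
    ⟨θ x.1 * (y.2 : B) + (x.2 : B) * θ y.1 + (x.2 : B) * (y.2 : B),
      I.add_mem (I.add_mem (hIl _ _ y.2.2) (hIr _ _ x.2.2)) (hIr _ _ x.2.2)⟩)

open NormedSpace

/-- The extension `D̃(a,i) = (D(a), 0)` of a map `D : A → A*` to a map
`A ⋈^θ I → (A ⋈^θ I)* ≅ A* × I*`. -/
noncomputable def Dtilde {A B : Type*} [NonUnitalNormedRing A] [NormedSpace ℂ A]
    [NonUnitalNormedRing B] [NormedSpace ℂ B] {I : Submodule ℂ B}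
    (D : A →L[ℂ] StrongDual ℂ A) (p : A × I) : StrongDual ℂ A × StrongDual ℂ I :=
  (D p.1, 0)

theorem Dtilde_amul_leibniz {A B : Type*} [NonUnitalNormedRing A] [NormedSpace ℂ A]
    [NonUnitalNormedRing B] [NormedSpace ℂ B] (θ : A →L[ℂ] B) {I : Submodule ℂ B}
    (hIl : ∀ b i : B, i ∈ I → b * i ∈ I) (hIr : ∀ b i : B, i ∈ I → i * b ∈ I)
    (D : A →L[ℂ] StrongDual ℂ A) (hD : ∀ a b c : A, D (a * b) c = D b (c * a) + D a (b * c))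
    (x y : A × I) (b : A) (j : I) :
    (Dtilde (I := I) D (amul θ hIl hIr x y)).1 b + (Dtilde (I := I) D (amul θ hIl hIr x y)).2 j
      = ((Dtilde (I := I) D y).1 (b * x.1)
          + (Dtilde (I := I) D y).2 ⟨θ b * (x.2 : B), hIl _ _ x.2.2⟩
          + (Dtilde (I := I) D y).2 ⟨(j : B) * (θ x.1 + (x.2 : B)), hIr _ _ j.2⟩)
        + ((Dtilde (I := I) D x).1 (y.1 * b)
          + (Dtilde (I := I) D x).2 ⟨(y.2 : B) * θ b, hIr _ _ y.2.2⟩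
          + (Dtilde (I := I) D x).2 ⟨(θ y.1 + (y.2 : B)) * (j : B), hIl _ _ j.2⟩) := by
  -- every `I*`-component of `D̃` is zero, leaving the derivation identity of `D` at `(x.1, y.1)`
  simp [Dtilde, amul, hD x.1 y.1 b]

theorem amalgamation_derivation_extension {A B : Type*} [NonUnitalNormedRing A]
    [NormedSpace ℂ A] [NonUnitalNormedRing B] [NormedSpace ℂ B]
    (θ : A →L[ℂ] B) (I : Submodule ℂ B)
    (hIl : ∀ b i : B, i ∈ I → b * i ∈ I) (hIr : ∀ b i : B, i ∈ I → i * b ∈ I)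
    (D : A →L[ℂ] StrongDual ℂ A) (hD : ∀ a b c : A, D (a * b) c = D b (c * a) + D a (b * c)) :
    (∀ x y : A × I, ∀ (b : A) (j : I),
      (Dtilde (I := I) D (amul θ hIl hIr x y)).1 b
          + (Dtilde (I := I) D (amul θ hIl hIr x y)).2 j
        = ((Dtilde (I := I) D y).1 (b * x.1)
            + (Dtilde (I := I) D y).2 ⟨θ b * (x.2 : B), hIl _ _ x.2.2⟩
            + (Dtilde (I := I) D y).2 ⟨(j : B) * (θ x.1 + (x.2 : B)), hIr _ _ j.2⟩)
          + ((Dtilde (I := I) D x).1 (y.1 * b)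
            + (Dtilde (I := I) D x).2 ⟨(y.2 : B) * θ b, hIr _ _ y.2.2⟩
            + (Dtilde (I := I) D x).2 ⟨(θ y.1 + (y.2 : B)) * (j : B), hIl _ _ j.2⟩)) ∧
    ((∃ (f : StrongDual ℂ A) (g : StrongDual ℂ I), ∀ (a : A) (i : I),
        (∀ b : A, D a b = (f (b * a) + g ⟨θ b * (i : B), hIl _ _ i.2⟩)
            - (f (a * b) + g ⟨(i : B) * θ b, hIr _ _ i.2⟩)) ∧
        (∀ j : I, (0 : ℂ) = g ⟨(j : B) * (θ a + (i : B)), hIr _ _ j.2⟩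
            - g ⟨(θ a + (i : B)) * (j : B), hIl _ _ j.2⟩)) ↔
      (∃ f : StrongDual ℂ A, ∀ a b : A, D a b = f (b * a) - f (a * b))) := by
  refine ⟨Dtilde_amul_leibniz θ hIl hIr D hD, ?_, ?_⟩
  · -- at `i = 0` the inner-derivation identity for `D̃` no longer involves `g`
    rintro ⟨f, g, hfg⟩
    exact ⟨f, fun a b => by simpa using (hfg a 0).1 b⟩
  · rintro ⟨f, hf⟩
    exact ⟨f, 0, fun a i => ⟨fun b => by simp [hf], fun j => by simp⟩⟩
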